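/- Fix constants y₄,y₆,y₈,y₁₀ ∈ ℂ. Let G₂,G₄,G₅,G₇ : ℝ → ℂ be functions such that for every t ∈ ℝ: G₂'(t) = −G₅(t); G₄'(t) = −2G₇(t); G₅'(t) = −35G₂(t)⁴ − 42G₂(t)²G₄(t) − 3G₄(t)² − 2y₄(5G₂(t)² + G₄(t)) + 4y₆G₂(t) − y₈; G₇'(t) = −7(3G₂(t)⁵ + 10G₂(t)³G₄(t) + 3G₂(t)G₄(t)²) − 10y₄(G₂(t)³ + G₂(t)G₄(t)) + 2y₆(3G₂(t)² + G₄(t)) − 3y₈G₂(t) + y₁₀ (each equation meaning the function has the indicated derivative at t). Then the functions t ↦ I₁₂(G₂(t),G₄(t),G₅(t),G₇(t)) and t ↦ I₁₄(G₂(t),G₄(t),G₅(t),G₇(t)) have derivative 0 at every t ∈ ℝ. -/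
import Mathlib


/- Context: the polynomial first integrals I₁₂ and I₁₄ of the dynamical systems (I)
and (II) on ℂ⁴ with constant parameters y₄, y₆, y₈, y₁₀. -/

def I12 (y4 y6 y8 y10 g2 g4 g5 g7 : ℂ) : ℂ :=
  2 * g5 * g7 - 7 * g2 ^ 6 - 35 * g2 ^ 4 * g4 - 21 * g2 ^ 2 * g4 ^ 2 - g4 ^ 3
    - y4 * (5 * g2 ^ 4 + 10 * g2 ^ 2 * g4 + g4 ^ 2) + 4 * y6 * (g2 ^ 3 + g2 * g4)
    - y8 * (3 * g2 ^ 2 + g4) + 2 * y10 * g2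

def I14 (y4 y6 y8 y10 g2 g4 g5 g7 : ℂ) : ℂ :=
  -g7 ^ 2 - g4 * g5 ^ 2 + 2 * g2 * g5 * g7 - 6 * g2 ^ 7 - 14 * g2 ^ 5 * g4
    + 14 * g2 ^ 3 * g4 ^ 2 + 6 * g2 * g4 ^ 3 - 4 * y4 * (g2 ^ 5 - g2 * g4 ^ 2)
    + y6 * (3 * g2 ^ 4 - 2 * g2 ^ 2 * g4 - g4 ^ 2) - 2 * y8 * (g2 ^ 3 - g2 * g4)
    + y10 * (g2 ^ 2 - g4)

section Aux
variable {f g : ℝ → ℂ} {f' g' : ℂ} {x : ℝ}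

lemma auxPow (n : ℕ) (h : HasDerivAt f f' x) :
    HasDerivAt (fun s => f s ^ n) ((n : ℂ) * f x ^ (n - 1) * f') x :=
  HasDerivAt.comp x (hasDerivAt_pow n (f x)) h

lemma auxCMul (c : ℂ) (h : HasDerivAt f f' x) :
    HasDerivAt (fun s => c * f s) (c * f') x := h.const_mul c

lemma auxMul (hf : HasDerivAt f f' x) (hg : HasDerivAt g g' x) :
    HasDerivAt (fun s => f s * g s) (f' * g x + f x * g') x := hf.mul hg

lemma auxAdd (hf : HasDerivAt f f' x) (hg : HasDerivAt g g' x) :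
    HasDerivAt (fun s => f s + g s) (f' + g') x := hf.add hg

lemma auxSub (hf : HasDerivAt f f' x) (hg : HasDerivAt g g' x) :
    HasDerivAt (fun s => f s - g s) (f' - g') x := hf.sub hg

lemma auxNeg (h : HasDerivAt f f' x) :
    HasDerivAt (fun s => -f s) (-f') x := h.neg

end Aux

lemma hasDerivAt_congr_deriv' {f : ℝ → ℂ} {f' g' : ℂ} {x : ℝ}
    (h : HasDerivAt f f' x) (e : f' = g') : HasDerivAt f g' x := e ▸ h

/-- Along any solution of the dynamical system (I), the functions
`t ↦ I₁₂(G₂,G₄,G₅,G₇)` and `t ↦ I₁₄(G₂,G₄,G₅,G₇)` have derivative `0` everywhere. -/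
theorem statement11 (y4 y6 y8 y10 : ℂ) (G2 G4 G5 G7 : ℝ → ℂ)
    (h2 : ∀ t : ℝ, HasDerivAt G2 (-(G5 t)) t)
    (h4 : ∀ t : ℝ, HasDerivAt G4 (-2 * G7 t) t)
    (h5 : ∀ t : ℝ, HasDerivAt G5
      (-35 * (G2 t) ^ 4 - 42 * (G2 t) ^ 2 * G4 t - 3 * (G4 t) ^ 2
        - 2 * y4 * (5 * (G2 t) ^ 2 + G4 t) + 4 * y6 * G2 t - y8) t)
    (h7 : ∀ t : ℝ, HasDerivAt G7
      (-7 * (3 * (G2 t) ^ 5 + 10 * (G2 t) ^ 3 * G4 t + 3 * G2 t * (G4 t) ^ 2)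
        - 10 * y4 * ((G2 t) ^ 3 + G2 t * G4 t)
        + 2 * y6 * (3 * (G2 t) ^ 2 + G4 t) - 3 * y8 * G2 t + y10) t) :
    ∀ t : ℝ,
      HasDerivAt (fun s => I12 y4 y6 y8 y10 (G2 s) (G4 s) (G5 s) (G7 s)) 0 t ∧
      HasDerivAt (fun s => I14 y4 y6 y8 y10 (G2 s) (G4 s) (G5 s) (G7 s)) 0 t := by
  intro t
  have d2 := h2 t
  have d4 := h4 t
  have d5 := h5 t
  have d7 := h7 t
  constructor
  · -- I12
    have a1 := auxMul (auxCMul 2 d5) d7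
    have a2 := auxCMul 7 (auxPow 6 d2)
    have a3 := auxMul (auxCMul 35 (auxPow 4 d2)) d4
    have a4 := auxMul (auxCMul 21 (auxPow 2 d2)) (auxPow 2 d4)
    have a5 := auxPow 3 d4
    have a6 := auxCMul y4 (auxAdd (auxAdd (auxCMul 5 (auxPow 4 d2))
      (auxMul (auxCMul 10 (auxPow 2 d2)) d4)) (auxPow 2 d4))
    have a7 := auxCMul (4 * y6) (auxAdd (auxPow 3 d2) (auxMul d2 d4))
    have a8 := auxCMul y8 (auxAdd (auxCMul 3 (auxPow 2 d2)) d4)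
    have a9 := auxCMul (2 * y10) d2
    have H := auxAdd (auxSub (auxAdd (auxSub (auxSub (auxSub (auxSub (auxSub a1 a2) a3) a4) a5)
      a6) a7) a8) a9
    exact hasDerivAt_congr_deriv' H (by push_cast; ring)
  · -- I14
    have b1 := auxNeg (auxPow 2 d7)
    have b2 := auxMul d4 (auxPow 2 d5)
    have b3 := auxMul (auxMul (auxCMul 2 d2) d5) d7
    have b4 := auxCMul 6 (auxPow 7 d2)
    have b5 := auxMul (auxCMul 14 (auxPow 5 d2)) d4
    have b6 := auxMul (auxCMul 14 (auxPow 3 d2)) (auxPow 2 d4)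
    have b7 := auxMul (auxCMul 6 d2) (auxPow 3 d4)
    have b8 := auxCMul (4 * y4) (auxSub (auxPow 5 d2) (auxMul d2 (auxPow 2 d4)))
    have b9 := auxCMul y6 (auxSub (auxSub (auxCMul 3 (auxPow 4 d2))
      (auxMul (auxCMul 2 (auxPow 2 d2)) d4)) (auxPow 2 d4))
    have b10 := auxCMul (2 * y8) (auxSub (auxPow 3 d2) (auxMul d2 d4))
    have b11 := auxCMul y10 (auxSub (auxPow 2 d2) d4)
    have H := auxAdd (auxSub (auxAdd (auxSub (auxAdd (auxAdd (auxSub (auxSub (auxAdd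
      (auxSub b1 b2) b3) b4) b5) b6) b7) b8) b9) b10) b11
    exact hasDerivAt_congr_deriv' H (by push_cast; ring)
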